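/- With K₃ defined as above (from Qf^∞ satisfying Qf^∞(q,z) ≤ β|z| and with a surface density g satisfying g(λ,θ,ν) ≤ C(1+|λ−θ|)): K₃(a,a,c,d,ν) ≤ C₁ |c−d| for all a ∈ ℝ^m, c,d ∈ ℝ^d, ν ∈ S^{N−1}, for some constant C₁ depending only on β. -/

import Mathlib

open MeasureTheory Filter RealInnerProductSpace

noncomputable section

abbrev Euc (N : ℕ) := EuclideanSpace ℝ (Fin N)
abbrev Vec (m : ℕ) := EuclideanSpace ℝ (Fin m)

/-- The open unit cube centered at the origin. -/
def ccCube (N : ℕ) : Set (Euc N) := {x | ∀ i, x i ∈ Set.Ioo (-(1:ℝ)/2) (1/2)}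

/-- A frame for `ν ∈ S^{N-1}`: a rotation `R` sending a coordinate direction to `ν`,
defining the unit cube `Q_ν = R(Q)` with one direction parallel to `ν`. -/
structure Frame (N : ℕ) where
  R : Euc N ≃ₗᵢ[ℝ] Euc N
  ν : Euc N
  hν : ‖ν‖ = 1
  iν : Fin N
  hR : R (EuclideanSpace.single iν 1) = ν

/-- The rotated unit cube `Q_ν`. -/
def Frame.cube {N : ℕ} (Fr : Frame N) : Set (Euc N) := Fr.R '' ccCube N

/-- The `(N-1)`-dimensional Hausdorff measure on `ℝ^N`. -/
def hm (N : ℕ) : Measure (Euc N) := Measure.hausdorffMeasure ((N : ℝ) - 1)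

/-- Admissible pairs `(v,u) ∈ (SBV₀(Q_ν;ℝ^m) ∩ L^∞) × W^{1,1}(Q_ν;ℝ^d)` for the cell
formula defining `K₃(a,b,c,e,ν)`: `v` is a bounded measurable piecewise-constant-type
function with jump set `J`, traces `vp, vm` and jump normal `νv`, of finite
`H^{N-1}`-jump measure; `u` is differentiable with integrable gradient; `(v,u)` take the
values `(a,c)` and `(b,e)` on the two faces of `Q_ν` orthogonal to `ν`, and are
`1`-periodic in the `N-1` lateral directions. -/
structure AdmPair (N m d : ℕ) (Fr : Frame N) (a b : Vec m) (c e : Fin d → ℝ) where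
  v : Euc N → Vec m
  J : Set (Euc N)
  vp : Euc N → Vec m
  vm : Euc N → Vec m
  νv : Euc N → Euc N
  u : Euc N → Fin d → ℝ
  u' : Euc N → (Euc N →L[ℝ] (Fin d → ℝ))
  hv_meas : Measurable v
  hv_bdd : ∃ M : ℝ, ∀ x, ‖v x‖ ≤ M
  hJ : hm N (J ∩ Fr.cube) < ⊤
  hu : ∀ x, HasFDerivAt u (u' x) x
  hu_int : IntegrableOn (fun x => ‖u' x‖) Fr.cube
  hbc_top : ∀ y : Euc N, (inner ℝ y Fr.ν : ℝ) = 1/2 → v y = a ∧ u y = c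
  hbc_bot : ∀ y : Euc N, (inner ℝ y Fr.ν : ℝ) = -(1/2) → v y = b ∧ u y = e
  hper : ∀ i : Fin N, i ≠ Fr.iν → ∀ y : Euc N,
    v (y + Fr.R (EuclideanSpace.single i 1)) = v y ∧
    u (y + Fr.R (EuclideanSpace.single i 1)) = u y

/-- The gradient of `u` as a `d × N` matrix. -/
def gradOf {N d : ℕ} (D : Euc N →L[ℝ] (Fin d → ℝ)) : Fin d → Fin N → ℝ :=
  fun i j => D (EuclideanSpace.single j 1) i

/-- The energy `∫_{Q_ν} Qf^∞(v,∇u) dx + ∫_{J_v ∩ Q_ν} g(v⁺,v⁻,ν_v) dH^{N-1}`. -/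
def energy {N m d : ℕ} (F : Vec m → (Fin d → Fin N → ℝ) → ℝ)
    (g : Vec m → Vec m → Euc N → ℝ) {Fr : Frame N} {a b : Vec m} {c e : Fin d → ℝ}
    (P : AdmPair N m d Fr a b c e) : ℝ :=
  (∫ x in Fr.cube, F (P.v x) (gradOf (P.u' x))) +
    ∫ x in P.J ∩ Fr.cube, g (P.vp x) (P.vm x) (P.νv x) ∂(hm N)

/-- The cell-formula density `K₃(a,b,c,e,ν)`. -/
def K3 {N m d : ℕ} (F : Vec m → (Fin d → Fin N → ℝ) → ℝ)
    (g : Vec m → Vec m → Euc N → ℝ) (Fr : Frame N) (a b : Vec m) (c e : Fin d → ℝ) : ℝ :=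
  sInf {r : ℝ | ∃ P : AdmPair N m d Fr a b c e, energy F g P = r}
/-! When the two values of `v` coincide, take `v ≡ a`, which has no jump set, and let `u` be the
affine transition layer `u(y) = (c + e)/2 + ⟪y, ν⟫ (c - e)` from `e` to `c` across `Q_ν`. Its
gradient has norm at most `|c - e|`, so its energy is at most `β |c - e|`; since all energies are
nonnegative, `K₃` is a genuine infimum and is bounded by it. -/

lemma volume_ccCube (N : ℕ) : volume (ccCube N) = 1 := by
  have : ccCube N = (MeasurableEquiv.toLp 2 (Fin N → ℝ)).symm ⁻¹'
      Set.univ.pi fun _ => Set.Ioo (-(1:ℝ)/2) (1/2) := by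
    ext x; simp [ccCube, Set.mem_pi, MeasurableEquiv.toLp]; exact Iff.rfl
  rw [this, (EuclideanSpace.volume_preserving_symm_measurableEquiv_toLp (Fin N)).measure_preimage
    (MeasurableSet.univ_pi fun _ => measurableSet_Ioo).nullMeasurableSet, volume_pi_pi]
  norm_num

namespace Frame

variable {N : ℕ} (Fr : Frame N)

lemma volume_cube : volume Fr.cube = 1 := by
  rw [cube, ← Fr.R.coe_toMeasurableEquiv, MeasurableEquiv.image_eq_preimage_symm,
    (MeasurePreserving.symm _ Fr.R.measurePreserving).measure_preimage_equiv, volume_ccCube]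

lemma inner_R_single_ν_of_ne {i : Fin N} (hi : i ≠ Fr.iν) :
    ⟪Fr.R (EuclideanSpace.single i 1), Fr.ν⟫ = 0 := by
  rw [← Fr.hR, Fr.R.inner_map_map, EuclideanSpace.inner_single_left]
  simp [hi]

end Frame

lemma norm_gradOf_le {N d : ℕ} (D : Euc N →L[ℝ] (Fin d → ℝ)) : ‖gradOf D‖ ≤ ‖D‖ := by
  refine pi_norm_le_iff_of_nonneg (norm_nonneg _) |>.2 fun i =>
    pi_norm_le_iff_of_nonneg (norm_nonneg _) |>.2 fun j => ?_
  calc ‖gradOf D i j‖ ≤ ‖D (EuclideanSpace.single j 1)‖ := norm_le_pi_norm _ i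
    _ ≤ ‖D‖ * ‖(EuclideanSpace.single j 1 : Euc N)‖ := D.le_opNorm _
    _ = ‖D‖ := by simp

lemma K3_le_energy {N m d : ℕ} {F : Vec m → (Fin d → Fin N → ℝ) → ℝ}
    {g : Vec m → Vec m → Euc N → ℝ} (hF0 : ∀ q z, 0 ≤ F q z) (hg0 : ∀ l t n, 0 ≤ g l t n)
    {Fr : Frame N} {a b : Vec m} {c e : Fin d → ℝ} (P : AdmPair N m d Fr a b c e) :
    K3 F g Fr a b c e ≤ energy F g P := by
  refine csInf_le ⟨0, ?_⟩ ⟨P, rfl⟩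
  rintro _ ⟨Q, rfl⟩
  exact add_nonneg (integral_nonneg fun _ => hF0 _ _) (integral_nonneg fun _ => hg0 _ _ _)

lemma innerSL_smulRight_apply {E F : Type*} [NormedAddCommGroup E] [InnerProductSpace ℝ E]
    [NormedAddCommGroup F] [NormedSpace ℝ F] (ν : E) (w : F) (y : E) :
    (innerSL ℝ ν).smulRight w y = ⟪y, ν⟫ • w := by
  simp [real_inner_comm]

namespace AdmPair

variable {N m d : ℕ} (Fr : Frame N) (a : Vec m) (c e : Fin d → ℝ)

def transitionLayer : AdmPair N m d Fr a a c e where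
  v _ := a
  J := ∅
  vp _ := 0
  vm _ := 0
  νv _ := 0
  u y := (1/2 : ℝ) • (c + e) + (innerSL ℝ Fr.ν).smulRight (c - e) y
  u' _ := (innerSL ℝ Fr.ν).smulRight (c - e)
  hv_meas := measurable_const
  hv_bdd := ⟨‖a‖, fun _ => le_rfl⟩
  hJ := by simp
  hu _ := ((innerSL ℝ Fr.ν).smulRight (c - e)).hasFDerivAt.const_add _
  hu_int := integrableOn_const (by simp [Fr.volume_cube])
  hbc_top y hy := ⟨rfl, by rw [innerSL_smulRight_apply, hy]; module⟩
  hbc_bot y hy := ⟨rfl, by rw [innerSL_smulRight_apply, hy]; module⟩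
  hper i hi y := ⟨rfl, by
    simp only [map_add, innerSL_smulRight_apply _ _ (Fr.R _), Fr.inner_R_single_ν_of_ne hi,
      zero_smul, add_zero]⟩

lemma energy_transitionLayer_le {β : ℝ} (hβ : 0 ≤ β) {F : Vec m → (Fin d → Fin N → ℝ) → ℝ}
    (hF : ∀ q z, F q z ≤ β * ‖z‖) (g : Vec m → Vec m → Euc N → ℝ) :
    energy F g (transitionLayer Fr a c e) ≤ β * ‖c - e‖ := by
  calc energy F g (transitionLayer Fr a c e)
      = F a (gradOf ((innerSL ℝ Fr.ν).smulRight (c - e))) := by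
        simp [energy, transitionLayer, measureReal_def, Fr.volume_cube]
    _ ≤ β * ‖(innerSL ℝ Fr.ν).smulRight (c - e)‖ := (hF _ _).trans
        (mul_le_mul_of_nonneg_left (norm_gradOf_le _) hβ)
    _ = β * ‖c - e‖ := by
        rw [ContinuousLinearMap.norm_smulRight_apply, innerSL_apply_norm, Fr.hν, one_mul]

end AdmPair

theorem K3_diag_first_general {N m d : ℕ} (β : ℝ) (hβ : 0 < β)
    (F : Vec m → (Fin d → Fin N → ℝ) → ℝ) (g : Vec m → Vec m → Euc N → ℝ)
    (hF0 : ∀ q z, 0 ≤ F q z) (hF : ∀ q z, F q z ≤ β * ‖z‖)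
    (hg0 : ∀ l t n, 0 ≤ g l t n) :
    ∃ C₁ > (0:ℝ), ∀ (Fr : Frame N) (a : Vec m) (c e : Fin d → ℝ),
      K3 F g Fr a a c e ≤ C₁ * ‖c - e‖ :=
  ⟨β, hβ, fun Fr a c e => (K3_le_energy hF0 hg0 _).trans
    (AdmPair.energy_transitionLayer_le Fr a c e hβ.le hF g)⟩

/-- with `0 ≤ Qf^∞(q,z) ≤ β|z|` and `0 ≤ g(λ,θ,ν) ≤ C(1+|λ−θ|)`, one has
`K₃(a,a,c,d,ν) ≤ C₁ |c−d|` for some constant `C₁ > 0` depending only on `β`. -/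
theorem K3_diag_first {N m d : ℕ} (β C : ℝ) (hβ : 0 < β) (hC : 0 < C)
    (F : Vec m → (Fin d → Fin N → ℝ) → ℝ) (g : Vec m → Vec m → Euc N → ℝ)
    (hF0 : ∀ q z, 0 ≤ F q z) (hF : ∀ q z, F q z ≤ β * ‖z‖)
    (hg0 : ∀ l t n, 0 ≤ g l t n)
    (hg2 : ∀ l t n, g l t n ≤ C * (1 + ‖l - t‖)) :
    ∃ C₁ > (0:ℝ), ∀ (Fr : Frame N) (a : Vec m) (c e : Fin d → ℝ),
      K3 F g Fr a a c e ≤ C₁ * ‖c - e‖ :=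
  K3_diag_first_general β hβ F g hF0 hF hg0

end
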